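/- arXiv:2202.12968 — 3 statements merged into one kernel-verified Lean document; each statement's English description precedes it below -/
import Mathlib

section
/- Let P and Q be probability measures on a measurable space such that for all measurable sets S, P(S) ≤ e^ε·Q(S) + δ and Q(S) ≤ e^ε·P(S) + δ, with ε ≥ 0 and 0 ≤ δ ≤ 1. Then the total variation distance between P and Q is at most 1 − (2/(1+e^ε))·(1−δ), i.e., for every measurable set S, P(S) − Q(S) ≤ 1 − (2/(1+e^ε))·(1−δ). -/
open Real MeasureTheory

/-! Apply the first inequality to `S` and the second to `Sᶜ`: with `p = P S`, `q = Q S` this gives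
`p ≤ e^ε q + δ` and `1 - q ≤ e^ε (1 - p) + δ`, whose sum is `(1 + e^ε)(p - q) ≤ e^ε - 1 + 2δ`. -/

lemma ENNReal.toReal_le_mul_add_of_le {x y : ENNReal} {c d : ℝ} (hc : 0 ≤ c) (hd : 0 ≤ d)
    (hy : y ≠ ⊤) (h : x ≤ ENNReal.ofReal c * y + ENNReal.ofReal d) :
    x.toReal ≤ c * y.toReal + d := by
  have := ENNReal.toReal_le_add h (by finiteness) ENNReal.ofReal_ne_top
  rwa [ENNReal.toReal_mul, ENNReal.toReal_ofReal hc, ENNReal.toReal_ofReal hd] at this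

lemma sub_le_one_sub_of_le_mul_add {a b E δ : ℝ} (hE : 0 < 1 + E)
    (hab : a ≤ E * b + δ) (hba : 1 - b ≤ E * (1 - a) + δ) :
    a - b ≤ 1 - 2 / (1 + E) * (1 - δ) := by
  have hsum : (a - b) * (1 + E) ≤ E - 1 + 2 * δ := by linarith
  calc a - b ≤ (E - 1 + 2 * δ) / (1 + E) := (le_div_iff₀ hE).2 hsum
    _ = 1 - 2 / (1 + E) * (1 - δ) := by field_simp; ring

theorem stmt_3_general {Ω : Type*} [MeasurableSpace Ω] (P Q : Measure Ω)
    [IsProbabilityMeasure P] [IsProbabilityMeasure Q]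
    (ε δ : ℝ) (hδ0 : 0 ≤ δ)
    (hPQ : ∀ S : Set Ω, MeasurableSet S →
      P S ≤ ENNReal.ofReal (exp ε) * Q S + ENNReal.ofReal δ)
    (hQP : ∀ S : Set Ω, MeasurableSet S →
      Q S ≤ ENNReal.ofReal (exp ε) * P S + ENNReal.ofReal δ) :
    ∀ S : Set Ω, MeasurableSet S →
      (P S).toReal - (Q S).toReal ≤ 1 - (2 / (1 + exp ε)) * (1 - δ) := by
  intro S hS
  have hS_bound := ENNReal.toReal_le_mul_add_of_le (exp_nonneg ε) hδ0 (measure_ne_top Q S)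
    (hPQ S hS)
  have hSc_bound := ENNReal.toReal_le_mul_add_of_le (exp_nonneg ε) hδ0 (measure_ne_top P Sᶜ)
    (hQP Sᶜ hS.compl)
  simp only [← measureReal_def, probReal_compl_eq_one_sub hS] at hS_bound hSc_bound ⊢
  exact sub_le_one_sub_of_le_mul_add (by positivity) hS_bound hSc_bound

/-- (ε,δ)-indistinguishability implies a total-variation bound:
P(S) - Q(S) ≤ 1 - (2/(1+e^ε))(1-δ) for every measurable S. -/
theorem stmt_3 {Ω : Type*} [MeasurableSpace Ω] (P Q : Measure Ω)
    [IsProbabilityMeasure P] [IsProbabilityMeasure Q]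
    (ε δ : ℝ) (hε : 0 ≤ ε) (hδ0 : 0 ≤ δ) (hδ1 : δ ≤ 1)
    (hPQ : ∀ S : Set Ω, MeasurableSet S →
      P S ≤ ENNReal.ofReal (exp ε) * Q S + ENNReal.ofReal δ)
    (hQP : ∀ S : Set Ω, MeasurableSet S →
      Q S ≤ ENNReal.ofReal (exp ε) * P S + ENNReal.ofReal δ) :
    ∀ S : Set Ω, MeasurableSet S →
      (P S).toReal - (Q S).toReal ≤ 1 - (2 / (1 + exp ε)) * (1 - δ) :=
  stmt_3_general P Q ε δ hδ0 hPQ hQP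
end

section
/- Under the hypotheses of Theorem 2, if additionally u takes values in [0, B], then Adv(𝒜, 𝒦) ≤ (1 − (2/(1+e^ε))(1−δ)) · B. In particular, when δ = 0 and ε = 0 the advantage is at most 0. -/
open Real MeasureTheory

lemma integral_le_of_forall_le_of_nonneg {Ω : Type*} [MeasurableSpace Ω] {μ : Measure Ω}
    [IsProbabilityMeasure μ] {f : Ω → ℝ} {B : ℝ} (hf : ∀ ω, f ω ≤ B) (hB : 0 ≤ B) :
    ∫ ω, f ω ∂μ ≤ B := by
  by_cases hint : Integrable f μ
  · calc ∫ ω, f ω ∂μ ≤ ∫ _, B ∂μ := integral_mono hint (integrable_const B) hf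
      _ = B := by simp
  · rw [integral_undef hint]
    exact hB

lemma Finset.one_div_card_mul_sum_le {ι : Type*} {s : Finset ι} {f : ι → ℝ} {B : ℝ}
    (hf : ∀ i ∈ s, f i ≤ B) (hB : 0 ≤ B) : 1 / (s.card : ℝ) * ∑ i ∈ s, f i ≤ B := by
  rcases s.eq_empty_or_nonempty with rfl | hs
  · simpa using hB
  · rw [one_div, inv_mul_le_iff₀ (by exact_mod_cast hs.card_pos)]
    simpa using s.sum_le_card_nsmul f B hf

lemma one_sub_two_div_one_add_exp_mul_nonneg {ε δ : ℝ} (hε : 0 ≤ ε) (hδ : 0 ≤ δ) :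
    0 ≤ 1 - 2 / (1 + exp ε) * (1 - δ) := by
  have hexp : 1 ≤ exp ε := one_le_exp hε
  have hratio : 2 / (1 + exp ε) ≤ 1 := (div_le_one (by linarith)).2 (by linarith)
  have hratio_nonneg : 0 ≤ 2 / (1 + exp ε) := by positivity
  nlinarith

theorem stmt_8_general {Ω : Type*} [MeasurableSpace Ω] (μ : Measure Ω) [IsProbabilityMeasure μ]
    {𝒴 : Type*}
    (ε δ B : ℝ) (hε : 0 ≤ ε) (hδ0 : 0 ≤ δ) (hB : 0 ≤ B)
    (u : 𝒴 → 𝒴 → ℝ) (huB : ∀ a b, u a b ≤ B)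
    (n : ℕ) (Y : Fin n → Ω → 𝒴)
    (Adv M : ℝ)
    (hM : M = (1 / (n : ℝ)) * ∑ i, ∫ ω, ⨆ y : 𝒴, u y (Y i ω) ∂μ)
    (hAdv : Adv ≤ (1 - (2 / (1 + exp ε)) * (1 - δ)) * M) :
    Adv ≤ (1 - (2 / (1 + exp ε)) * (1 - δ)) * B ∧
      (ε = 0 → δ = 0 → Adv ≤ 0) := by
  have hMB : M ≤ B := by
    have hexpect_le : ∀ i, ∫ ω, ⨆ y : 𝒴, u y (Y i ω) ∂μ ≤ B := fun i =>
      integral_le_of_forall_le_of_nonneg (fun ω => Real.iSup_le (fun y => huB y _) hB) hB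
    simpa [hM] using Finset.one_div_card_mul_sum_le (s := Finset.univ) (fun i _ => hexpect_le i) hB
  have hbound : Adv ≤ (1 - (2 / (1 + exp ε)) * (1 - δ)) * B :=
    hAdv.trans (mul_le_mul_of_nonneg_left hMB (one_sub_two_div_one_add_exp_mul_nonneg hε hδ0))
  refine ⟨hbound, ?_⟩
  rintro rfl rfl
  norm_num at hbound
  exact hbound

/-- Corollary 1: if the attack advantage satisfies the Theorem 2 bound with
M = (1/n)∑ᵢ E[sup_y u(y, Yᵢ)] and u takes values in [0,B], then
Adv ≤ (1 - (2/(1+e^ε))(1-δ))·B; in particular Adv ≤ 0 when ε = 0 and δ = 0. -/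
theorem stmt_8 {Ω : Type*} [MeasurableSpace Ω] (μ : Measure Ω) [IsProbabilityMeasure μ]
    {𝒴 : Type*} [Fintype 𝒴] [Nonempty 𝒴]
    (ε δ B : ℝ) (hε : 0 ≤ ε) (hδ0 : 0 ≤ δ) (hδ1 : δ ≤ 1) (hB : 0 ≤ B)
    (u : 𝒴 → 𝒴 → ℝ) (hu0 : ∀ a b, 0 ≤ u a b) (huB : ∀ a b, u a b ≤ B)
    (n : ℕ) (hn : 0 < n) (Y : Fin n → Ω → 𝒴)
    (Adv M : ℝ)
    (hM : M = (1 / (n : ℝ)) * ∑ i, ∫ ω, ⨆ y : 𝒴, u y (Y i ω) ∂μ)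
    (hAdv : Adv ≤ (1 - (2 / (1 + exp ε)) * (1 - δ)) * M) :
    Adv ≤ (1 - (2 / (1 + exp ε)) * (1 - δ)) * B ∧
      (ε = 0 → δ = 0 → Adv ≤ 0) :=
  stmt_8_general μ ε δ B hε hδ0 hB u huB n Y Adv M hM hAdv
end

section
/- Let 𝒴 = {−1, 1}, let features X_1 = … = X_r = 1 and X_{r+1} = … = X_{2r} = −1, and let true labels y_i = X_i deterministically. Let ỹ_i be independent randomized responses with P(ỹ_i = y_i) = e^ε/(e^ε+1), and define f(1) = sign(∑_{i=1}^r ỹ_i), f(−1) = sign(∑_{i=r+1}^{2r} ỹ_i). Then the expected training accuracy E[(1/(2r)) ∑_{i=1}^{2r} 1[f(X_i) = y_i]] is at least 1 − 2·exp(−(e^ε/(e^ε+1) − 1/2)²·2r). -/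
/-!
Within each of the two blocks of `r` points the classifier predicts the sign of the sum of the
`r` noisy labels of that block, so it is right on the whole block exactly when the majority of
those labels is correct. Multiplying each noisy label by the true label of its block gives
independent `±1` votes of mean `2p - 1 > 0`, where `p = e^ε / (e^ε + 1)`; by Hoeffding's
inequality the majority is wrong with probability at most `exp (-2r (p - 1/2)²)`. Hence the
expected training accuracy is at least `1 - exp (-2r (p - 1/2)²)`.
-/

open Real MeasureTheory ProbabilityTheory Finset

lemma Real.sign_eq_iff_pos_mul {a c : ℝ} (hc : c = 1 ∨ c = -1) :
    Real.sign a = c ↔ 0 < c * a := by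
  rcases hc with rfl | rfl <;> unfold Real.sign <;> split_ifs <;> constructor <;> intros <;>
    linarith

section Probability

variable {Ω : Type*} [MeasurableSpace Ω] {μ : Measure Ω}

lemma integral_sum_ite_eq_sum_measureReal [IsFiniteMeasure μ] {ι : Type*} (s : Finset ι)
    {P : ι → Ω → Prop} [∀ i ω, Decidable (P i ω)] (hP : ∀ i ∈ s, MeasurableSet {ω | P i ω}) :
    ∫ ω, ∑ i ∈ s, (if P i ω then (1 : ℝ) else 0) ∂μ = ∑ i ∈ s, μ.real {ω | P i ω} := by
  have hite : ∀ i, (fun ω ↦ if P i ω then (1 : ℝ) else 0) = {ω | P i ω}.indicator 1 := by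
    intro i; ext ω; simp [Set.indicator_apply]
  rw [integral_finsetSum s fun i hi ↦ by rw [hite]; exact (integrable_const 1).indicator (hP i hi)]
  exact sum_congr rfl fun i hi ↦ by rw [hite, integral_indicator_one (hP i hi)]

lemma integral_eq_two_mul_measureReal_sub_one [IsProbabilityMeasure μ] {X : Ω → ℝ}
    (hX : Measurable X) (h : ∀ᵐ ω ∂μ, X ω = 1 ∨ X ω = -1) :
    μ[X] = 2 * μ.real {ω | X ω = 1} - 1 := by
  have hs : MeasurableSet {ω | X ω = 1} := hX (measurableSet_singleton 1)
  have hX_eq : X =ᵐ[μ] fun ω ↦ 2 * {ω | X ω = 1}.indicator 1 ω - 1 := by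
    filter_upwards [h] with ω hω
    rcases hω with hω | hω <;> norm_num [Set.indicator_apply, hω]
  rw [integral_congr_ae hX_eq, integral_sub ((integrable_const 1).indicator hs |>.const_mul 2)
    (integrable_const 1), integral_const_mul, integral_indicator_one hs]
  simp

lemma measureReal_sum_nonpos_le [IsProbabilityMeasure μ] {ι : Type*} {Z : ι → Ω → ℝ}
    (hindep : iIndepFun Z μ) (hmeas : ∀ i, Measurable (Z i)) (s : Finset ι) {m : ℝ} (hm : 0 ≤ m)
    (hZ : ∀ i ∈ s, ∀ᵐ ω ∂μ, Z i ω ∈ Set.Icc (-1) 1) (hmean : ∀ i ∈ s, μ[Z i] = m) :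
    μ.real {ω | ∑ i ∈ s, Z i ω ≤ 0} ≤ exp (-(#s * m ^ 2 / 2)) := by
  have hindep' : iIndepFun (fun i ω ↦ m - Z i ω) μ :=
    hindep.comp (fun _ x ↦ m - x) fun _ ↦ by fun_prop
  have hsubG : ∀ i ∈ s, HasSubgaussianMGF (fun ω ↦ m - Z i ω) 1 μ := by
    intro i hi
    have h := (hasSubgaussianMGF_of_mem_Icc (hmeas i).aemeasurable (hZ i hi)).neg
    rw [hmean i hi] at h
    convert h using 1
    · ext ω; simp
    · ext; norm_num
  have hHoeffding :=
    HasSubgaussianMGF.measure_sum_ge_le_of_iIndepFun hindep' hsubG (ε := #s * m) (by positivity)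
  have hset : {ω | ∑ i ∈ s, Z i ω ≤ 0} = {ω | #s * m ≤ ∑ i ∈ s, (m - Z i ω)} := by
    ext ω; simp [sum_sub_distrib]
  rw [hset]
  refine hHoeffding.trans_eq (congrArg exp ?_)
  rw [NNReal.coe_sum, sum_const, NNReal.coe_one, nsmul_one]
  rcases eq_or_ne #s 0 with h0 | h0
  · simp [h0]
  · field_simp

/-- `0 < c * ∑ i ∈ s, X i` says that the majority of the `±1` votes `X i` is `c`. -/
lemma one_sub_exp_le_measureReal_mul_sum_pos [IsProbabilityMeasure μ] {ι : Type*}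
    {X : ι → Ω → ℝ} (hindep : iIndepFun X μ) (hmeas : ∀ i, Measurable (X i)) (s : Finset ι)
    {c p : ℝ} (hc : c = 1 ∨ c = -1) (hp : 1 / 2 ≤ p)
    (hX : ∀ i ∈ s, ∀ᵐ ω ∂μ, X i ω = 1 ∨ X i ω = -1)
    (hprob : ∀ i ∈ s, μ.real {ω | X i ω = c} = p) :
    1 - exp (-(p - 1 / 2) ^ 2 * (2 * #s)) ≤ μ.real {ω | 0 < c * ∑ i ∈ s, X i ω} := by
  set Z : ι → Ω → ℝ := fun i ω ↦ c * X i ω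
  have hZ_meas : ∀ i, Measurable (Z i) := fun i ↦ (hmeas i).const_mul c
  have hZ_sign : ∀ i ∈ s, ∀ᵐ ω ∂μ, Z i ω = 1 ∨ Z i ω = -1 := fun i hi ↦ by
    filter_upwards [hX i hi] with ω hω
    rcases hc with rfl | rfl <;> rcases hω with h | h <;> norm_num [Z, h]
  have hZ_mean : ∀ i ∈ s, μ[Z i] = 2 * p - 1 := fun i hi ↦ by
    rw [integral_eq_two_mul_measureReal_sub_one (hZ_meas i) (hZ_sign i hi), ← hprob i hi]
    congr 3; ext ω
    rcases hc with rfl | rfl <;> simp [Z, neg_eq_iff_eq_neg]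
  have hZ_Icc : ∀ i ∈ s, ∀ᵐ ω ∂μ, Z i ω ∈ Set.Icc (-1) 1 := fun i hi ↦ by
    filter_upwards [hZ_sign i hi] with ω hω
    rcases hω with h | h <;> norm_num [h]
  have hZ_indep : iIndepFun Z μ := hindep.comp (fun _ x ↦ c * x) fun _ ↦ by fun_prop
  have hwrong := measureReal_sum_nonpos_le hZ_indep hZ_meas s (by linarith) hZ_Icc hZ_mean
  have hcompl : {ω | 0 < c * ∑ i ∈ s, X i ω} = {ω | ∑ i ∈ s, Z i ω ≤ 0}ᶜ := by
    ext ω; simp [Z, mul_sum]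
  rw [hcompl, probReal_compl_eq_one_sub
    (measurableSet_le (Finset.measurable_sum s fun i _ ↦ hZ_meas i) measurable_const)]
  have hexp : -(p - 1 / 2) ^ 2 * (2 * #s) = -(#s * (2 * p - 1) ^ 2 / 2) := by ring
  rw [hexp]
  linarith

end Probability

lemma card_filter_le_val_fin_two_mul (r : ℕ) : #{j : Fin (2 * r) | r ≤ (j : ℕ)} = r := by
  have hsplit := card_filter_add_card_filter_not (s := univ) fun j : Fin (2 * r) ↦ (j : ℕ) < r
  simp only [Fin.card_filter_val_lt, not_lt, card_univ, Fintype.card_fin] at hsplit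
  omega

lemma exists_majority_block {α : Type*} {r : ℕ} {y : Fin (2 * r) → ℝ}
    (hy : ∀ i, y i = if (i : ℕ) < r then 1 else -1) (x : Fin (2 * r) → α → ℝ) (f : ℝ → α → ℝ)
    (hf1 : ∀ ω, f 1 ω = Real.sign (∑ j : Fin (2 * r), if (j : ℕ) < r then x j ω else 0))
    (hf2 : ∀ ω, f (-1) ω = Real.sign (∑ j : Fin (2 * r), if r ≤ (j : ℕ) then x j ω else 0))
    (i : Fin (2 * r)) :
    ∃ s : Finset (Fin (2 * r)), #s = r ∧ (∀ j ∈ s, y j = y i) ∧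
      ∀ ω, f (y i) ω = Real.sign (∑ j ∈ s, x j ω) := by
  by_cases hi : (i : ℕ) < r
  · refine ⟨univ.filter fun j ↦ (j : ℕ) < r, by simp [Fin.card_filter_val_lt]; omega,
      fun j hj ↦ ?_, fun ω ↦ ?_⟩
    · rw [hy j, hy i, if_pos (mem_filter.1 hj).2, if_pos hi]
    · rw [hy i, if_pos hi, hf1, sum_filter]
  · refine ⟨univ.filter fun j ↦ r ≤ (j : ℕ), card_filter_le_val_fin_two_mul r,
      fun j hj ↦ ?_, fun ω ↦ ?_⟩
    · rw [hy j, hy i, if_neg (mem_filter.1 hj).2.not_gt, if_neg hi]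
    · rw [hy i, if_neg hi, hf2, sum_filter]

/-- The explicit construction in the impossibility theorem: on 2r points with
deterministic labels y_i = X_i ∈ {−1,1}, a majority-vote classifier trained on
ε-randomized-response labels has expected training accuracy at least
1 − 2·exp(−(e^ε/(e^ε+1) − 1/2)²·2r). -/
theorem stmt_15 {Ω : Type*} [MeasurableSpace Ω] (μ : Measure Ω) [IsProbabilityMeasure μ]
    (ε : ℝ) (hε : 0 < ε) (r : ℕ) (hr : 0 < r)
    (y : Fin (2 * r) → ℝ) (hy : ∀ i, y i = if (i : ℕ) < r then 1 else -1)
    (ytil : Fin (2 * r) → Ω → ℝ) (hmeas : ∀ i, Measurable (ytil i))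
    (hindep : iIndepFun ytil μ)
    (hrange : ∀ i, ∀ᵐ ω ∂μ, ytil i ω = 1 ∨ ytil i ω = -1)
    (hp : ∀ i, (μ {ω | ytil i ω = y i}).toReal = exp ε / (exp ε + 1))
    (f : ℝ → Ω → ℝ)
    (hf1 : ∀ ω, f 1 ω = Real.sign (∑ j : Fin (2 * r), if (j : ℕ) < r then ytil j ω else 0))
    (hf2 : ∀ ω, f (-1) ω = Real.sign (∑ j : Fin (2 * r), if r ≤ (j : ℕ) then ytil j ω else 0)) :
    1 - 2 * exp (-(exp ε / (exp ε + 1) - 1 / 2) ^ 2 * (2 * r)) ≤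
      ∫ ω, (1 / (2 * (r : ℝ))) *
        ∑ i : Fin (2 * r), (if f (y i) ω = y i then (1 : ℝ) else 0) ∂μ := by
  set p := exp ε / (exp ε + 1)
  set E := exp (-(p - 1 / 2) ^ 2 * (2 * r))
  have hp_half : 1 / 2 ≤ p := by
    rw [le_div_iff₀ (by positivity)]; linarith [one_lt_exp_iff.2 hε]
  have hcorrect : ∀ i, MeasurableSet {ω | f (y i) ω = y i} ∧
      1 - E ≤ μ.real {ω | f (y i) ω = y i} := by
    intro i
    obtain ⟨s, hs, hys, hfs⟩ := exists_majority_block hy ytil f hf1 hf2 i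
    have hy_sign : y i = 1 ∨ y i = -1 := by rw [hy i]; split_ifs <;> simp
    have hset : {ω | f (y i) ω = y i} = {ω | 0 < y i * ∑ j ∈ s, ytil j ω} := by
      ext ω; simp only [Set.mem_ofPred_eq, hfs, Real.sign_eq_iff_pos_mul hy_sign]
    have hmajority := one_sub_exp_le_measureReal_mul_sum_pos hindep hmeas s hy_sign hp_half
      (fun j _ ↦ hrange j) fun j hj ↦ hys j hj ▸ hp j
    rw [hs] at hmajority
    rw [hset]
    exact ⟨measurableSet_lt measurable_const
      ((Finset.measurable_sum s fun j _ ↦ hmeas j).const_mul _), hmajority⟩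
  rw [integral_const_mul, integral_sum_ite_eq_sum_measureReal _ fun i _ ↦ (hcorrect i).1]
  calc 1 - 2 * E ≤ 1 / (2 * r) * ∑ _i : Fin (2 * r), (1 - E) := by
        rw [sum_const, card_univ, Fintype.card_fin, nsmul_eq_mul]
        push_cast
        field_simp
        linarith [exp_pos (-(p - 1 / 2) ^ 2 * (2 * r))]
    _ ≤ _ := by gcongr with i; exact (hcorrect i).2
end
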